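/- arXiv:0804.4517 — 2 statements merged into one kernel-verified Lean document; each statement's English description precedes it below -/
import Mathlib

section
/- Let A and B be n×n real positive definite matrices. Then A∘B⁻¹ − Diag(A)(A∘B)⁻¹Diag(A) is positive semidefinite, i.e., A∘B⁻¹ ≥ Diag(A)(A∘B)⁻¹Diag(A) in the Loewner order. (Here A∘B is positive definite, hence invertible, by the Schur product theorem.) -/
/-!
Write `D = A ∘ I`. The block matrices `[[A, A], [A, A]]` and `[[B, I], [I, B⁻¹]]` are positive
semidefinite (the second has Schur complement `B⁻¹ - B⁻¹ = 0`), so by the Schur product theorem so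
is their Hadamard product `[[A ∘ B, D], [D, A ∘ B⁻¹]]`. Its upper-left block `A ∘ B` is positive
definite, and the Schur complement of that block is `A ∘ B⁻¹ - D (A ∘ B)⁻¹ D`.
-/

open Matrix

namespace Matrix

variable {l m n o α : Type*}

theorem fromBlocks_hadamard_fromBlocks [Mul α] (A A' : Matrix l n α) (B B' : Matrix l o α)
    (C C' : Matrix m n α) (D D' : Matrix m o α) :
    fromBlocks A B C D ⊙ fromBlocks A' B' C' D' = fromBlocks (A ⊙ A') (B ⊙ B') (C ⊙ C') (D ⊙ D') := by
  ext (i | i) (j | j) <;> rfl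

theorem fromBlocks_self_eq_submatrix (A : Matrix m n α) :
    fromBlocks A A A A = A.submatrix (Sum.elim id id) (Sum.elim id id) := by
  ext (i | i) (j | j) <;> rfl

open scoped ComplexOrder

variable {𝕜 : Type*} [RCLike 𝕜]

theorem PosSemidef.fromBlocks_self {A : Matrix n n 𝕜} (hA : A.PosSemidef) :
    (fromBlocks A A A A).PosSemidef := by
  rw [fromBlocks_self_eq_submatrix]
  exact hA.submatrix _

variable [Fintype n] [DecidableEq n]

theorem PosDef.posSemidef_fromBlocks_one_inv {B : Matrix n n 𝕜} (hB : B.PosDef) :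
    (fromBlocks B 1 1 B⁻¹).PosSemidef := by
  have : Invertible B := hB.isUnit.invertible
  simpa using (PosDef.fromBlocks₁₁ 1 B⁻¹ hB).mpr (by simpa using PosSemidef.zero)

end Matrix

/-- For `n × n` real positive definite matrices `A` and `B`,
`A∘B⁻¹ ≥ Diag(A) (A∘B)⁻¹ Diag(A)` in the Loewner order, where `∘` is the Hadamard
product and `Diag(A) = A∘I`. -/
theorem hadamard_inv_ge_diag_inv_diag {n : ℕ} (A B : Matrix (Fin n) (Fin n) ℝ)
    (hA : A.PosDef) (hB : B.PosDef) :
    (A.hadamard B⁻¹ - (A.hadamard 1) * (A.hadamard B)⁻¹ * (A.hadamard 1)).PosSemidef := by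
  have hAB : (A ⊙ B).PosDef := hA.hadamard hB
  have : Invertible (A ⊙ B) := hAB.isUnit.invertible
  have hdiag : (A ⊙ 1)ᴴ = A ⊙ 1 := hA.isHermitian.hadamard isHermitian_one
  have hblocks : (fromBlocks (A ⊙ B) (A ⊙ 1) (A ⊙ 1)ᴴ (A ⊙ B⁻¹)).PosSemidef := by
    rw [hdiag, ← fromBlocks_hadamard_fromBlocks]
    exact hA.posSemidef.fromBlocks_self.hadamard hB.posSemidef_fromBlocks_one_inv
  simpa only [hdiag] using (PosDef.fromBlocks₁₁ _ _ hAB).mp hblocks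
end

section
/- Let n ≥ 1 and let Φ be a random n×n real matrix on a probability space such that Φ(ω) is positive semidefinite for (almost) every ω and each entry of Φ is square-integrable. Then E[Φ∘Φ] − (1/n)·diag(E[Φ])diag(E[Φ])ᵀ is positive semidefinite, i.e., E[Φ∘Φ] ≥ diag(E[Φ])diag(E[Φ])ᵀ/n in the Loewner order, where expectations of matrices and vectors are taken entrywise. -/
open Matrix MeasureTheory ProbabilityTheory

/-!
Pointwise, write a positive semidefinite `A` as `S * S` with `S` symmetric and put
`C = S * diagonal x * S`. Then `tr C = x ⬝ᵥ diag A` and `tr (C Cᵀ) = x ⬝ᵥ (A ⊙ A) x`, so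
Cauchy–Schwarz on the diagonal of `C` gives `A ⊙ A ≥ diag A (diag A)ᵀ / n`. Taking expectations
with `d = diag Φ` yields `E[Φ ⊙ Φ] ≥ E[d dᵀ] / n`, and `E[d dᵀ] - E[d] E[d]ᵀ` is the covariance
matrix of `d`, which is positive semidefinite.
-/

namespace Matrix

variable {ι : Type*} [Fintype ι]

theorem trace_sq_le_card_mul_trace_mul_transpose (C : Matrix ι ι ℝ) :
    C.trace ^ 2 ≤ Fintype.card ι * (C * Cᵀ).trace := by
  calc C.trace ^ 2 ≤ Fintype.card ι * ∑ i, C i i ^ 2 := sq_sum_le_card_mul_sum_sq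
    _ ≤ Fintype.card ι * ∑ i, ∑ j, C i j ^ 2 := by
      gcongr with i
      exact Finset.single_le_sum (f := fun j => C i j ^ 2) (fun j _ => sq_nonneg _)
        (Finset.mem_univ i)
    _ = Fintype.card ι * (C * Cᵀ).trace := by
      rw [← sum_hadamard_eq]; simp [sq]

theorem PosSemidef.sq_dotProduct_diag_le {A : Matrix ι ι ℝ} (hA : A.PosSemidef) (x : ι → ℝ) :
    (x ⬝ᵥ A.diag) ^ 2 ≤ Fintype.card ι * (x ⬝ᵥ (A ⊙ A) *ᵥ x) := by
  classical
  obtain ⟨S, hS, rfl⟩ : ∃ S : Matrix ι ι ℝ, Sᵀ = S ∧ A = S * S := by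
    open scoped MatrixOrder in
    exact ⟨CFC.sqrt A, by simpa [IsSymm] using (CFC.sqrt_nonneg A).posSemidef.isHermitian,
      (CFC.sqrt_mul_sqrt_self A hA.nonneg).symm⟩
  set C := S * diagonal x * S
  have hC : Cᵀ = C := by simp [C, transpose_mul, hS, Matrix.mul_assoc]
  have htrace : C.trace = x ⬝ᵥ (S * S).diag := by
    rw [trace_mul_cycle]
    simp [trace, dotProduct, mul_comm]
  have htrace_sq : (C * Cᵀ).trace = x ⬝ᵥ ((S * S) ⊙ (S * S)) *ᵥ x := by
    rw [dotProduct_mulVec, dotProduct_vecMul_hadamard, hC]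
    simp only [C, transpose_mul, hS, diagonal_transpose, Matrix.mul_assoc]
    rw [trace_mul_comm S]
    simp only [Matrix.mul_assoc]
  rw [← htrace, ← htrace_sq]
  exact trace_sq_le_card_mul_trace_mul_transpose C

theorem PosSemidef.hadamard_self_sub_smul_vecMulVec_diag {A : Matrix ι ι ℝ} (hA : A.PosSemidef) :
    (A ⊙ A - (Fintype.card ι : ℝ)⁻¹ • vecMulVec A.diag A.diag).PosSemidef := by
  refine .of_dotProduct_mulVec_nonneg ((hA.1.hadamard hA.1).sub ?_) fun x => ?_
  · simpa using ((posSemidef_vecMulVec_self_star A.diag).smul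
      (inv_nonneg.2 (Fintype.card ι).cast_nonneg)).isHermitian
  · rw [star_trivial, sub_mulVec, dotProduct_sub, smul_mulVec, dotProduct_smul, vecMulVec_mulVec,
      op_smul_eq_smul, dotProduct_smul, dotProduct_comm A.diag, smul_eq_mul, smul_eq_mul, ← sq,
      sub_nonneg]
    exact inv_mul_le_of_le_mul₀ (Fintype.card ι).cast_nonneg
      (by simpa using (hA.hadamard hA).dotProduct_mulVec_nonneg x) (hA.sq_dotProduct_diag_le x)

end Matrix

section Integral

variable {ι Ω : Type*} [Fintype ι] [MeasurableSpace Ω] {μ : Measure Ω}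

theorem integral_dotProduct_mulVec {F : Ω → Matrix ι ι ℝ}
    (hF : ∀ i j, Integrable (fun ω => F ω i j) μ) (x y : ι → ℝ) :
    ∫ ω, x ⬝ᵥ F ω *ᵥ y ∂μ = x ⬝ᵥ (of fun i j => ∫ ω, F ω i j ∂μ) *ᵥ y := by
  simp only [dotProduct, mulVec, of_apply, Finset.mul_sum]
  rw [integral_finsetSum _ fun i _ => integrable_finsetSum _ fun j _ =>
    ((hF i j).mul_const _).const_mul _]
  refine Finset.sum_congr rfl fun i _ => ?_
  rw [integral_finsetSum _ fun j _ => ((hF i j).mul_const _).const_mul _]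
  refine Finset.sum_congr rfl fun j _ => ?_
  rw [integral_const_mul, integral_mul_const]

theorem Matrix.posSemidef_integral_of_ae {F : Ω → Matrix ι ι ℝ}
    (hF : ∀ i j, Integrable (fun ω => F ω i j) μ) (hpsd : ∀ᵐ ω ∂μ, (F ω).PosSemidef) :
    (of fun i j => ∫ ω, F ω i j ∂μ).PosSemidef := by
  refine .of_dotProduct_mulVec_nonneg ?_ fun x => ?_
  · ext i j
    simp only [conjTranspose_apply, of_apply, star_trivial]
    exact integral_congr_ae (hpsd.mono fun ω h => by simpa using h.isHermitian.apply i j)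
  · rw [star_trivial, ← integral_dotProduct_mulVec hF]
    exact integral_nonneg_of_ae (hpsd.mono fun ω h => by simpa using h.dotProduct_mulVec_nonneg x)

theorem ProbabilityTheory.posSemidef_covariance [IsFiniteMeasure μ] {X : ι → Ω → ℝ}
    (hX : ∀ i, MemLp (X i) 2 μ) :
    (of fun i j => cov[X i, X j; μ]).PosSemidef := by
  have hcentered : ∀ i, MemLp (fun ω => X i ω - μ[X i]) 2 μ := fun i => (hX i).sub (memLp_const _)
  -- `cov[X i, X j; μ]` unfolds to the `(i, j)` entry of `E[(X - E X) (X - E X)ᵀ]`.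
  exact posSemidef_integral_of_ae
    (F := fun ω => vecMulVec (fun i => X i ω - μ[X i]) (fun i => X i ω - μ[X i]))
    (fun i j => (hcentered i).integrable_mul (hcentered j))
    (ae_of_all _ fun ω => posSemidef_vecMulVec_self_star _)

end Integral

theorem expectation_hadamard_sq_ge_diag_general {n : ℕ} {Ω : Type*}
    [MeasurableSpace Ω] (μ : Measure Ω) [IsProbabilityMeasure μ]
    (Φ : Ω → Matrix (Fin n) (Fin n) ℝ)
    (hint : ∀ i j, MemLp (fun ω => Φ ω i j) 2 μ)
    (hpsd : ∀ᵐ ω ∂μ, (Φ ω).PosSemidef) :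
    ((Matrix.of fun i j => ∫ ω, Φ ω i j * Φ ω i j ∂μ) -
      (n : ℝ)⁻¹ • Matrix.vecMulVec (fun i => ∫ ω, Φ ω i i ∂μ)
        (fun j => ∫ ω, Φ ω j j ∂μ)).PosSemidef := by
  have hmul : ∀ i j k l, Integrable (fun ω => Φ ω i j * Φ ω k l) μ := fun i j k l =>
    (hint i j).integrable_mul (hint k l)
  have hpointwise := posSemidef_integral_of_ae
    (F := fun ω => Φ ω ⊙ Φ ω - (n : ℝ)⁻¹ • vecMulVec (Φ ω).diag (Φ ω).diag)
    (fun i j => (hmul i j i j).sub ((hmul i i j j).const_mul _))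
    (hpsd.mono fun ω h => by simpa using h.hadamard_self_sub_smul_vecMulVec_diag)
  have hcov := posSemidef_covariance (μ := μ) (X := fun i ω => Φ ω i i) fun i => hint i i
  convert hpointwise.add (hcov.smul (inv_nonneg.2 (n.cast_nonneg : (0 : ℝ) ≤ n))) using 1
  ext i j
  simp only [of_apply, Matrix.sub_apply, Matrix.add_apply, Matrix.smul_apply, hadamard_apply,
    vecMulVec_apply, diag_apply, smul_eq_mul]
  rw [integral_sub (hmul i j i j) ((hmul i i j j).const_mul _), integral_const_mul,
    covariance_eq_sub (hint i i) (hint j j)]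
  simp only [Pi.mul_apply]
  ring

/-- Let `Φ` be a random `n × n` real matrix (`n ≥ 1`) that is almost surely positive
semidefinite, with square-integrable entries. Then
`E[Φ∘Φ] ≥ diag(E[Φ]) diag(E[Φ])ᵀ / n` in the Loewner order, all expectations being
taken entrywise. -/
theorem expectation_hadamard_sq_ge_diag {n : ℕ} (hn : 1 ≤ n) {Ω : Type*}
    [MeasurableSpace Ω] (μ : Measure Ω) [IsProbabilityMeasure μ]
    (Φ : Ω → Matrix (Fin n) (Fin n) ℝ)
    (hmeas : ∀ i j, Measurable fun ω => Φ ω i j)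
    (hint : ∀ i j, MemLp (fun ω => Φ ω i j) 2 μ)
    (hpsd : ∀ᵐ ω ∂μ, (Φ ω).PosSemidef) :
    ((Matrix.of fun i j => ∫ ω, Φ ω i j * Φ ω i j ∂μ) -
      (n : ℝ)⁻¹ • Matrix.vecMulVec (fun i => ∫ ω, Φ ω i i ∂μ)
        (fun j => ∫ ω, Φ ω j j ∂μ)).PosSemidef :=
  expectation_hadamard_sq_ge_diag_general μ Φ hint hpsd
end
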